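/- Let q₀ ≥ ⋯ ≥ q_{n−1} be reals, m ≥ 1, n ≥ 2m+1, b > 0, and let w* = w̄ := (1/(n−m))·Σ_{h=0}^{n−m−1} q_h. If all m appended values equal q₀ + b, then the m-trimmed mean of the resulting n+m values equals w*. -/

import Mathlib

open Finset

/-- Median of a multiset of reals: average of the two middle order statistics
(equal to the middle one for odd cardinality). -/
noncomputable def med (s : Multiset ℝ) : ℝ :=
  ((s.sort (· ≤ ·)).getD ((Multiset.card s - 1) / 2) 0 +
    (s.sort (· ≤ ·)).getD (Multiset.card s / 2) 0) / 2

/-- `m`-trimmed mean: remove the `m` largest and `m` smallest values and average the rest. -/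
noncomputable def trimmedMean (m : ℕ) (s : Multiset ℝ) : ℝ :=
  ((((s.sort (· ≤ ·)).drop m).take (Multiset.card s - 2 * m)).sum) /
    ((Multiset.card s : ℝ) - 2 * m)

/-- The multiset of the first `n` values of `q`. -/
noncomputable def qMs (n : ℕ) (q : ℕ → ℝ) : Multiset ℝ :=
  (Finset.range n).val.map q

/-!
Every appended value `q 0 + b` lies above all of `q 0, …, q (n-1)`, so sorting the enlarged
multiset puts the `m` copies last. Dropping the `m` smallest values removes
`q (n-1), …, q (n-m)`, and the `n - m` values kept next are exactly `q (n-m-1), …, q 0`: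
the appended block is cut off entirely.
-/

theorem Multiset.sort_add_replicate_of_forall_le {α : Type*} [LinearOrder α]
    {s : Multiset α} {c : α} (hc : ∀ x ∈ s, x ≤ c) (m : ℕ) :
    (s + Multiset.replicate m c).sort (· ≤ ·) = s.sort (· ≤ ·) ++ List.replicate m c := by
  have hsorted : (s.sort (· ≤ ·) ++ List.replicate m c).Pairwise (· ≤ ·) :=
    List.pairwise_append.mpr ⟨s.pairwise_sort _, List.pairwise_replicate.mpr (.inr le_rfl),
      fun x hx y hy => List.eq_of_mem_replicate hy ▸ hc x (Multiset.mem_sort _ |>.mp hx)⟩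
  have hcoe : (↑(s.sort (· ≤ ·) ++ List.replicate m c) : Multiset α) = s + .replicate m c := by
    rw [← Multiset.coe_add, Multiset.sort_eq, Multiset.coe_replicate]
  rw [← hcoe, Multiset.coe_sort, List.mergeSort_eq_self _ hsorted]

theorem trimmedMean_add_replicate_of_forall_le {s : Multiset ℝ} {c : ℝ} (hc : ∀ x ∈ s, x ≤ c)
    (m : ℕ) :
    trimmedMean m (s + Multiset.replicate m c) =
      ((s.sort (· ≤ ·)).drop m).sum / ((Multiset.card s : ℝ) - m) := by
  have hlen : ((s.sort (· ≤ ·)).drop m).length = Multiset.card s + m - 2 * m := by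
    simp only [List.length_drop, Multiset.length_sort]
    omega
  rw [trimmedMean, Multiset.sort_add_replicate_of_forall_le hc, List.drop_append,
    Multiset.card_add, Multiset.card_replicate, ← hlen, List.take_left]
  push_cast
  ring_nf

theorem card_qMs (n : ℕ) (q : ℕ → ℝ) : Multiset.card (qMs n q) = n := by
  simp [qMs]

theorem sort_qMs_of_antitoneOn {n : ℕ} {q : ℕ → ℝ} (hq : AntitoneOn q (Set.Iio n)) :
    (qMs n q).sort (· ≤ ·) = ((List.range n).map q).reverse := by
  have hsorted : ((List.range n).map q).reverse.Pairwise (· ≤ ·) := by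
    rw [List.pairwise_reverse, List.pairwise_map]
    exact (List.pairwise_lt_range (n := n)).imp_of_mem
      fun hi hj hij => hq (List.mem_range.mp hi) (List.mem_range.mp hj) hij.le
  have hcoe : (↑((List.range n).map q).reverse : Multiset ℝ) = qMs n q := by
    rw [Multiset.coe_reverse, ← Multiset.map_coe]
    rfl
  rw [← hcoe, Multiset.coe_sort, List.mergeSort_eq_self _ hsorted]

theorem sum_drop_sort_qMs_of_antitoneOn {n : ℕ} {q : ℕ → ℝ} (hq : AntitoneOn q (Set.Iio n))
    (m : ℕ) : (((qMs n q).sort (· ≤ ·)).drop m).sum = ∑ h ∈ range (n - m), q h := by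
  rw [sort_qMs_of_antitoneOn hq, List.drop_reverse, List.sum_reverse, List.length_map,
    List.length_range, ← List.map_take, List.take_range, Finset.sum_eq_multiset_sum]
  simp [Multiset.range]

theorem stmt15_general (n m : ℕ) (q : ℕ → ℝ)
    (hq : ∀ i j, i ≤ j → j < n → q j ≤ q i) (b wstar : ℝ) (hb : 0 < b)
    (hw : wstar = (∑ h ∈ Finset.range (n - m), q h) / ((n : ℝ) - m)) :
    trimmedMean m (qMs n q + Multiset.replicate m (q 0 + b)) = wstar := by
  have hanti : AntitoneOn q (Set.Iio n) := fun i _ j hj hij => hq i j hij hj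
  have hle : ∀ x ∈ qMs n q, x ≤ q 0 + b := by
    simp only [qMs, Multiset.mem_map, Finset.mem_val, Finset.mem_range]
    rintro _ ⟨i, hi, rfl⟩
    linarith [hq 0 i i.zero_le hi]
  rw [trimmedMean_add_replicate_of_forall_le hle, sum_drop_sort_qMs_of_antitoneOn hanti,
    card_qMs, hw]

theorem stmt15 (n m : ℕ) (hm : 1 ≤ m) (hn : 2 * m + 1 ≤ n) (q : ℕ → ℝ)
    (hq : ∀ i j, i ≤ j → j < n → q j ≤ q i) (b wstar : ℝ) (hb : 0 < b)
    (hw : wstar = (∑ h ∈ Finset.range (n - m), q h) / ((n : ℝ) - m)) :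
    trimmedMean m (qMs n q + Multiset.replicate m (q 0 + b)) = wstar :=
  stmt15_general n m q hq b wstar hb hw
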